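/- arXiv:1802.00686 — 3 statements merged into one kernel-verified Lean document; each statement's English description precedes it below -/
import Mathlib

section
/- Let x be a 1-form on a finite connected graph G. Every minimal form m̃ ∈ F(x) (a 1-form in F(x) with support of minimal cardinality) is of the form m(·,T) for some x-minimal spanning tree T of G. -/
open Classical Finset

/-- A (multi)graph given by oriented edges: each oriented edge `e` has a starting
vertex `head e` and an ending vertex `tail e`, and a reversal involution. -/
structure OGraph (V A : Type) where
  head : A → V
  tail : A → V
  rev : A → A
  rev_rev : ∀ e, rev (rev e) = e
  rev_ne : ∀ e, rev e ≠ e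
  head_rev : ∀ e, head (rev e) = tail e

namespace OGraph

variable {V A : Type}

/-- `G.IsWalkFrom l u v` : the list of oriented edges `l` is a walk from `u` to `v`. -/
def IsWalkFrom (G : OGraph V A) : List A → V → V → Prop
  | [], u, v => u = v
  | e :: l, u, v => G.head e = u ∧ G.IsWalkFrom l (G.tail e) v

def Connected (G : OGraph V A) : Prop := ∀ u v : V, ∃ l : List A, G.IsWalkFrom l u v

/-- A (vector-valued) 1-form on the graph. -/
def IsOneForm (G : OGraph V A) {d : ℕ} (b : A → Fin d → ℝ) : Prop :=
  ∀ e, b (G.rev e) = - b e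

/-- `G.InF x b` : `b` is a 1-form with the same flux as `x` through every cycle
(equivalently, every closed walk); this is the set `F(x)`. -/
def InF (G : OGraph V A) {d : ℕ} (x b : A → Fin d → ℝ) : Prop :=
  G.IsOneForm b ∧ ∀ (u : V) (l : List A), G.IsWalkFrom l u u →
    (l.map b).sum = (l.map x).sum

/-- A closed trail: a nonempty closed walk repeating no (unoriented) edge. -/
def IsClosedTrail (G : OGraph V A) (l : List A) (u : V) : Prop :=
  G.IsWalkFrom l u u ∧ l ≠ [] ∧ l.Pairwise (fun e f => e ≠ f ∧ e ≠ G.rev f)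

/-- A spanning tree, as a set of oriented edges closed under reversal:
connected, spanning, and acyclic. -/
def IsSpanningTree (G : OGraph V A) (T : Set A) : Prop :=
  (∀ e ∈ T, G.rev e ∈ T) ∧
  (∀ u v : V, ∃ l : List A, (∀ e ∈ l, e ∈ T) ∧ G.IsWalkFrom l u v) ∧
  ¬ ∃ (l : List A) (u : V), (∀ e ∈ l, e ∈ T) ∧ G.IsClosedTrail l u

/-- `c` is a fundamental cycle of the edge `e ∉ T` with respect to the spanning
tree `T` : a cycle through `e` all of whose other edges lie in `T`. -/
def FundCycle (G : OGraph V A) (T : Set A) (e : A) (c : List A) : Prop :=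
  (∃ u, G.IsClosedTrail c u) ∧ e ∈ c ∧ ∀ f ∈ c, f ≠ e → f ∈ T

/-- `S` chooses one orientation of each edge not in `T`. -/
def IsOrientation (G : OGraph V A) (T S : Set A) : Prop :=
  (∀ e ∈ S, e ∉ T) ∧ ∀ e, e ∉ T → (e ∈ S ↔ G.rev e ∉ S)

/-- The 1-form `m(·,T)` : zero on the tree and equal to the flux of `x` through
the fundamental cycle `c e` on each non-tree edge `e` (oriented via `S`). -/
noncomputable def mForm (G : OGraph V A) {d : ℕ} (x : A → Fin d → ℝ) (S : Set A)
    (c : A → List A) : A → Fin d → ℝ :=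
  fun e => if e ∈ S then ((c e).map x).sum
    else if G.rev e ∈ S then - (((c (G.rev e)).map x).sum) else 0

/-- The number of oriented edges in the support of a 1-form. -/
noncomputable def suppCard [Fintype A] {d : ℕ} (b : A → Fin d → ℝ) : ℕ :=
  (Finset.univ.filter (fun e => b e ≠ 0)).card

/-- Twice the number `β_T` of fundamental cycles of `T` with nonzero `x`-flux
(each non-tree unoriented edge is counted in both orientations). -/
noncomputable def badCount [Fintype A] {d : ℕ} (x : A → Fin d → ℝ) (T : Set A)
    (c : A → List A) : ℕ :=
  (Finset.univ.filter (fun e => e ∉ T ∧ ((c e).map x).sum ≠ 0)).card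

/-- An `x`-minimal spanning tree: the number of fundamental cycles with nonzero
`x`-flux is minimal among all spanning trees. -/
def IsMinTree [Fintype A] (G : OGraph V A) {d : ℕ} (x : A → Fin d → ℝ) (T : Set A) : Prop :=
  G.IsSpanningTree T ∧ ∃ c : A → List A, (∀ e, e ∉ T → G.FundCycle T e (c e)) ∧
    ∀ (T' : Set A) (c' : A → List A), G.IsSpanningTree T' →
      (∀ e, e ∉ T' → G.FundCycle T' e (c' e)) → badCount x T c ≤ badCount x T' c'

end OGraph

namespace OGraph

variable {V A : Type}

variable {G : OGraph V A}

theorem tail_rev (e : A) : G.tail (G.rev e) = G.head e := by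
  have := G.head_rev (G.rev e); rw [G.rev_rev] at this; exact this.symm

theorem walk_append {l₁ l₂ : List A} {u w v : V} (h₁ : G.IsWalkFrom l₁ u w)
    (h₂ : G.IsWalkFrom l₂ w v) : G.IsWalkFrom (l₁ ++ l₂) u v := by
  induction l₁ generalizing u with
  | nil => cases h₁; simpa using h₂
  | cons e l ih => exact ⟨h₁.1, ih h₁.2⟩

theorem walk_append_iff {l₁ l₂ : List A} {u v : V} :
    G.IsWalkFrom (l₁ ++ l₂) u v ↔ ∃ w, G.IsWalkFrom l₁ u w ∧ G.IsWalkFrom l₂ w v := by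
  constructor
  · intro h
    induction l₁ generalizing u with
    | nil => exact ⟨u, rfl, h⟩
    | cons e l ih =>
      obtain ⟨w, hw1, hw2⟩ := ih h.2
      exact ⟨w, ⟨h.1, hw1⟩, hw2⟩
  · rintro ⟨w, h₁, h₂⟩; exact walk_append h₁ h₂

def revWalk (G : OGraph V A) (l : List A) : List A := (l.map G.rev).reverse

theorem walk_rev {l : List A} {u v : V} (h : G.IsWalkFrom l u v) :
    G.IsWalkFrom (G.revWalk l) v u := by
  induction l generalizing u with
  | nil => cases h; rfl
  | cons e l ih =>
    obtain ⟨h1, h2⟩ := h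
    have : G.IsWalkFrom [G.rev e] (G.tail e) u := by
      refine ⟨G.head_rev e, ?_⟩
      simp [IsWalkFrom, tail_rev, h1]
    simpa [revWalk] using walk_append (ih h2) this

theorem mem_revWalk {l : List A} {e : A} : e ∈ G.revWalk l ↔ G.rev e ∈ l := by
  simp only [revWalk, List.mem_reverse, List.mem_map]
  constructor
  · rintro ⟨a, ha, rfl⟩; rwa [G.rev_rev]
  · intro h; exact ⟨G.rev e, h, G.rev_rev e⟩

variable {d : ℕ}

theorem sum_revWalk {y : A → Fin d → ℝ} (hy : G.IsOneForm y) (l : List A) :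
    ((G.revWalk l).map y).sum = - (l.map y).sum := by
  induction l with
  | nil => simp [revWalk]
  | cons e l ih =>
    simp only [revWalk, List.map_cons, List.reverse_cons, List.map_append,
      List.map_reverse] at *
    simp only [List.sum_append, ih, List.map_cons, List.map_nil, List.sum_cons,
      List.sum_nil, hy e, List.sum_cons]
    abel

theorem sum_grad (f : V → Fin d → ℝ) {l : List A} {u v : V} (h : G.IsWalkFrom l u v) :
    (l.map (fun a => f (G.tail a) - f (G.head a))).sum = f v - f u := by
  induction l generalizing u with
  | nil => cases h; simp
  | cons e l ih =>
    obtain ⟨h1, h2⟩ := h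
    simp only [List.map_cons, List.sum_cons, ih h2, h1]
    abel

/-- substitution of detours -/
theorem walk_subst {T T' : Set A}
    (hd : ∀ a ∈ T, ∃ w : List A, (∀ f ∈ w, f ∈ T') ∧ G.IsWalkFrom w (G.head a) (G.tail a))
    {l : List A} {u v : V} (hl : ∀ f ∈ l, f ∈ T) (h : G.IsWalkFrom l u v) :
    ∃ w : List A, (∀ f ∈ w, f ∈ T') ∧ G.IsWalkFrom w u v := by
  induction l generalizing u with
  | nil => exact ⟨[], by simp, h⟩
  | cons e l ih =>
    obtain ⟨h1, h2⟩ := h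
    obtain ⟨w₁, hw₁, hw₁'⟩ := hd e (hl e (by simp))
    obtain ⟨w₂, hw₂, hw₂'⟩ := ih (fun f hf => hl f (by simp [hf])) h2
    refine ⟨w₁ ++ w₂, ?_, h1 ▸ walk_append hw₁' hw₂'⟩
    intro f hf
    rcases List.mem_append.1 hf with h | h
    exacts [hw₁ f h, hw₂ f h]

/-- decomposition of non-pairwise lists -/
theorem not_pairwise_decomp {R : A → A → Prop} {l : List A} (h : ¬ l.Pairwise R) :
    ∃ (l₁ l₂ l₃ : List A) (a b : A), l = l₁ ++ a :: (l₂ ++ b :: l₃) ∧ ¬ R a b := by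
  induction l with
  | nil => exact absurd List.Pairwise.nil h
  | cons e l ih =>
    rw [List.pairwise_cons] at h
    push_neg at h
    by_cases hall : ∀ a ∈ l, R e a
    · obtain ⟨l₁, l₂, l₃, a, b, rfl, hab⟩ := ih (h hall)
      exact ⟨e :: l₁, l₂, l₃, a, b, rfl, hab⟩
    · push_neg at hall
      obtain ⟨b, hb, hrb⟩ := hall
      obtain ⟨l₂, l₃, rfl⟩ := List.append_of_mem hb
      exact ⟨[], l₂, l₃, e, b, rfl, hrb⟩


/-- every walk can be shortcut to a trail -/
theorem exists_trail {P : A → Prop} {u v : V} :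
    ∀ (n : ℕ) (l : List A), l.length ≤ n → (∀ e ∈ l, P e) → G.IsWalkFrom l u v →
    ∃ l', (∀ e ∈ l', P e) ∧ G.IsWalkFrom l' u v ∧
      l'.Pairwise (fun e f => e ≠ f ∧ e ≠ G.rev f) := by
  intro n
  induction n with
  | zero =>
    intro l hl hP hw
    rw [Nat.le_zero, List.length_eq_zero_iff] at hl
    exact ⟨l, hP, hw, by simp [hl]⟩
  | succ n ih =>
    intro l hl hP hw
    by_cases hpw : l.Pairwise (fun e f => e ≠ f ∧ e ≠ G.rev f)
    · exact ⟨l, hP, hw, hpw⟩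
    obtain ⟨l₁, l₂, l₃, a, b, rfl, hab⟩ := not_pairwise_decomp hpw
    push_neg at hab
    obtain ⟨w₁, hw₁, hrest⟩ := walk_append_iff.1 hw
    obtain ⟨hha, hrest2⟩ := hrest
    obtain ⟨w₂, hw₂, hb, hl₃⟩ : ∃ w₂, G.IsWalkFrom l₂ (G.tail a) w₂ ∧ G.head b = w₂ ∧
        G.IsWalkFrom l₃ (G.tail b) v := by
      obtain ⟨w₂, h1, h2, h3⟩ := walk_append_iff.1 hrest2
      exact ⟨w₂, h1, h2, h3⟩
    by_cases hcase : a = b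
    · -- shortcut to l₁ ++ a :: l₃
      subst hcase
      refine ih (l₁ ++ a :: l₃) ?_ ?_ ?_
      · have := hl; simp at this ⊢; omega
      · intro e he; apply hP; simp at he ⊢; tauto
      · exact walk_append hw₁ ⟨hha, hl₃⟩
    · have hb' : a = G.rev b := hab hcase
      -- shortcut to l₁ ++ l₃
      refine ih (l₁ ++ l₃) ?_ ?_ ?_
      · have := hl; simp at this ⊢; omega
      · intro e he; apply hP; simp at he ⊢; tauto
      · refine walk_append hw₁ ?_
        have : G.tail b = G.head a := by rw [hb', head_rev]
        rwa [this, hha] at hl₃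
                
/-- any closed walk in an acyclic edge set has zero flux for every 1-form -/
theorem acyclic_flux_zero {T : Set A}
    (hT : ¬ ∃ (l : List A) (u : V), (∀ e ∈ l, e ∈ T) ∧ G.IsClosedTrail l u)
    {y : A → Fin d → ℝ} (hy : G.IsOneForm y) :
    ∀ (n : ℕ) (l : List A), l.length ≤ n → ∀ u, (∀ e ∈ l, e ∈ T) →
      G.IsWalkFrom l u u → (l.map y).sum = 0 := by
  intro n
  induction n with
  | zero =>
    intro l hl u hT' hw
    rw [Nat.le_zero, List.length_eq_zero_iff] at hl
    simp [hl]
  | succ n ih =>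
    intro l hl u hT' hw
    rcases List.eq_nil_or_concat l with rfl | hne
    · simp
    have hne : l ≠ [] := by rcases hne with ⟨L, b, rfl⟩; simp
    have hpw : ¬ l.Pairwise (fun e f => e ≠ f ∧ e ≠ G.rev f) := by
      intro hpw
      exact hT ⟨l, u, hT', hw, hne, hpw⟩
    obtain ⟨l₁, l₂, l₃, a, b, rfl, hab⟩ := not_pairwise_decomp hpw
    push_neg at hab
    obtain ⟨w₁, hw₁, hha, hrest2⟩ : ∃ w₁, G.IsWalkFrom l₁ u w₁ ∧ G.head a = w₁ ∧
        G.IsWalkFrom (l₂ ++ b :: l₃) (G.tail a) u := by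
      obtain ⟨w₁, h1, h2, h3⟩ := walk_append_iff.1 hw
      exact ⟨w₁, h1, h2, h3⟩
    obtain ⟨w₂, hw₂, hb, hl₃⟩ : ∃ w₂, G.IsWalkFrom l₂ (G.tail a) w₂ ∧ G.head b = w₂ ∧
        G.IsWalkFrom l₃ (G.tail b) u := by
      obtain ⟨w₂, h1, h2, h3⟩ := walk_append_iff.1 hrest2
      exact ⟨w₂, h1, h2, h3⟩
    have hmem : ∀ S' : List A, (∀ e ∈ S', e ∈ l₁ ∨ e = a ∨ e ∈ l₂ ∨ e = b ∨ e ∈ l₃) →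
        ∀ e ∈ S', e ∈ T := by
      intro S' hS' e he
      apply hT'
      rcases hS' e he with h|h|h|h|h <;> simp [h]
    have hlen := hl
    simp only [List.length_append, List.length_cons] at hlen
    by_cases hcase : a = b
    · subst hcase
      -- l = l₁ ++ a :: l₂ ++ a :: l₃;  pieces : a :: l₂ closed at head a, l₁ ++ a :: l₃ closed at u
      have h1 : ((a :: l₂).map y).sum = 0 := by
        refine ih (a :: l₂) (by simp; omega) (G.head a) (hmem _ (by intro e he; simp at he; tauto)) ?_
        exact ⟨rfl, hb ▸ hw₂⟩
      have h2 : ((l₁ ++ a :: l₃).map y).sum = 0 := by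
        refine ih (l₁ ++ a :: l₃) (by simp; omega) u (hmem _ (by intro e he; simp at he; tauto)) ?_
        exact walk_append hw₁ ⟨hha, hl₃⟩
      simp only [List.map_append, List.map_cons, List.sum_append, List.sum_cons] at h1 h2 ⊢
      have := congrArg₂ (· + ·) h1 h2
      simp only [add_zero] at this
      calc (l₁.map y).sum + (y a + ((l₂.map y).sum + (y a + (l₃.map y).sum)))
          = (y a + (l₂.map y).sum) + ((l₁.map y).sum + (y a + (l₃.map y).sum)) := by abel
        _ = 0 := by rw [h1, h2, add_zero]
    · have hb' : a = G.rev b := hab hcase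
      -- pieces : l₂ closed at tail a, l₁ ++ l₃ closed at u
      have hba : b = G.rev a := by rw [hb', G.rev_rev]
      have hhb : G.head b = G.tail a := by rw [hba, head_rev]
      have htb : G.tail b = G.head a := by rw [hba, tail_rev]
      have h1 : (l₂.map y).sum = 0 := by
        refine ih l₂ (by omega) (G.tail a) (hmem _ (by intro e he; tauto)) ?_
        rw [hhb] at hb
        rw [hb]
        rwa [hb] at hw₂

      have h2 : ((l₁ ++ l₃).map y).sum = 0 := by
        refine ih (l₁ ++ l₃) (by simp; omega) u (hmem _ (by intro e he; simp at he; tauto)) ?_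
        refine walk_append hw₁ ?_
        rwa [htb, hha] at hl₃
      have hya : y a + y b = 0 := by rw [hba, hy a]; abel
      simp only [List.map_append, List.map_cons, List.sum_append, List.sum_cons] at h1 h2 ⊢
      calc (l₁.map y).sum + (y a + ((l₂.map y).sum + (y b + (l₃.map y).sum)))
          = (l₂.map y).sum + ((l₁.map y).sum + (l₃.map y).sum) + (y a + y b) := by abel
        _ = 0 := by rw [h1, h2, hya, add_zero, add_zero]


theorem rev_not_mem {T : Set A} (hrev : ∀ e ∈ T, G.rev e ∈ T) {e : A} (he : e ∉ T) :
    G.rev e ∉ T := fun h => he (by simpa [G.rev_rev] using hrev _ h)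

/-- a rev-closed spanning edge set contains a spanning tree -/
theorem spanning_tree_exists [Fintype A] {Z : Set A} (hrev : ∀ e ∈ Z, G.rev e ∈ Z)
    (hspan : ∀ u v : V, ∃ l : List A, (∀ e ∈ l, e ∈ Z) ∧ G.IsWalkFrom l u v) :
    ∃ T : Set A, T ⊆ Z ∧ G.IsSpanningTree T := by
  classical
  set P : Finset A → Prop := fun t => (↑t ⊆ Z) ∧ (∀ e ∈ t, G.rev e ∈ t) ∧
    (∀ u v : V, ∃ l : List A, (∀ e ∈ l, e ∈ (t : Set A)) ∧ G.IsWalkFrom l u v) with hP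
  have hne : (Finset.univ.filter P).Nonempty := by
    refine ⟨(Set.toFinite Z).toFinset, Finset.mem_filter.2 ⟨Finset.mem_univ _, ?_, ?_, ?_⟩⟩
    · intro a ha; simpa using ha
    · intro e he
      simp only [Set.Finite.mem_toFinset] at he ⊢
      exact hrev e he
    · intro u v
      obtain ⟨l, hl, hw⟩ := hspan u v
      exact ⟨l, fun e he => by simpa using hl e he, hw⟩
  obtain ⟨t, ht, hmin⟩ := Finset.exists_min_image _ Finset.card hne
  rw [Finset.mem_filter] at ht
  replace ht := ht.2
  refine ⟨↑t, ht.1, ht.2.1, ht.2.2, ?_⟩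
  rintro ⟨l, u, hlT, hw, hlne, hpw⟩
  obtain ⟨e, l', rfl⟩ : ∃ e l', l = e :: l' := by
    cases l with
    | nil => exact absurd rfl hlne
    | cons e l' => exact ⟨e, l', rfl⟩
  obtain ⟨hhe, hwl'⟩ := hw
  rw [List.pairwise_cons] at hpw
  have hl'e : ∀ f ∈ l', f ≠ e ∧ f ≠ G.rev e := by
    intro f hf
    obtain ⟨h1, h2⟩ := hpw.1 f hf
    refine ⟨fun h => h1 h.symm, fun h => h2 ?_⟩
    rw [h, G.rev_rev]
  have het : e ∈ t := by simpa using hlT e (by simp)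
  set t' : Finset A := (t.erase e).erase (G.rev e) with ht'
  have ht'mem : ∀ f, f ∈ t' ↔ f ∈ t ∧ f ≠ e ∧ f ≠ G.rev e := by
    intro f; simp [ht', Finset.mem_erase]; tauto
  have ht'rev : ∀ f ∈ t', G.rev f ∈ t' := by
    intro f hf
    rw [ht'mem] at hf ⊢
    obtain ⟨h1, h2, h3⟩ := hf
    refine ⟨ht.2.1 f h1, fun h => h3 ?_, fun h => h2 ?_⟩
    · rw [← G.rev_rev f, h]
    · rw [← G.rev_rev f, h, G.rev_rev]
  have hl't' : ∀ f ∈ l', f ∈ (t' : Set A) := by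
    intro f hf
    have h2 := hl'e f hf
    rw [Finset.mem_coe, ht'mem]
    exact ⟨by simpa using hlT f (by simp [hf]), h2.1, h2.2⟩
  have hwalkl' : G.IsWalkFrom l' (G.tail e) (G.head e) := by rw [hhe]; exact hwl'
  have hP' : P t' := by
    refine ⟨?_, ht'rev, ?_⟩
    · intro f hf
      rw [Finset.mem_coe, ht'mem] at hf
      exact ht.1 (Finset.mem_coe.2 hf.1)
    · intro u' v'
      obtain ⟨l₀, hl₀, hw₀⟩ := ht.2.2 u' v'
      refine walk_subst ?_ hl₀ hw₀
      intro a ha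
      by_cases hae : a = e
      · subst hae
        refine ⟨G.revWalk l', ?_, walk_rev hwalkl'⟩
        intro f hf
        rw [mem_revWalk] at hf
        have h3 := ht'rev _ (Finset.mem_coe.1 (hl't' _ hf))
        rw [G.rev_rev] at h3
        exact Finset.mem_coe.2 h3
      · by_cases hae' : a = G.rev e
        · subst hae'
          refine ⟨l', hl't', ?_⟩
          rw [G.head_rev, tail_rev]
          exact hwalkl'
        · refine ⟨[a], ?_, ⟨rfl, rfl⟩⟩
          intro f hf
          simp only [List.mem_singleton] at hf
          subst hf
          rw [Finset.mem_coe, ht'mem]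
          exact ⟨by simpa using ha, hae, hae'⟩
  have hcard : t'.card < t.card := by
    calc t'.card ≤ (t.erase e).card := Finset.card_le_card (Finset.erase_subset _ _)
      _ < t.card := Finset.card_erase_lt_of_mem het
  have := hmin t' (Finset.mem_filter.2 ⟨Finset.mem_univ _, hP'⟩)
  omega


/-- decomposing a fundamental cycle: rotate it to start with `e` -/
theorem fundcycle_decomp {T : Set A} {e : A} {ce : List A} (hc : G.FundCycle T e ce) :
    ∃ q : List A, (∀ f ∈ q, f ∈ T) ∧ G.IsWalkFrom q (G.tail e) (G.head e) ∧
      ∀ (y : A → Fin d → ℝ), (ce.map y).sum = y e + (q.map y).sum := by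
  obtain ⟨⟨u, hw, hne, hpw⟩, hmem, hother⟩ := hc
  obtain ⟨l₁, l₂, rfl⟩ := List.append_of_mem hmem
  rw [List.pairwise_append] at hpw
  have hfe : ∀ f, f ∈ l₁ ∨ f ∈ l₂ → f ≠ e := by
    rintro f (hf | hf)
    · exact (hpw.2.2 f hf e (by simp)).1
    · have := (List.pairwise_cons.1 hpw.2.1).1 f hf
      exact fun h => this.1 h.symm
  obtain ⟨w₁, hw₁, hha, hrest⟩ : ∃ w₁, G.IsWalkFrom l₁ u w₁ ∧ G.head e = w₁ ∧
      G.IsWalkFrom l₂ (G.tail e) u := by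
    obtain ⟨w₁, h1, h2, h3⟩ := walk_append_iff.1 hw
    exact ⟨w₁, h1, h2, h3⟩
  refine ⟨l₂ ++ l₁, ?_, ?_, ?_⟩
  · intro f hf
    rcases List.mem_append.1 hf with h | h
    · exact hother f (by simp [h]) (hfe f (Or.inr h))
    · exact hother f (by simp [h]) (hfe f (Or.inl h))
  · exact walk_append hrest (hha ▸ hw₁)
  · intro y
    have hperm : (l₁ ++ e :: l₂).Perm (e :: (l₂ ++ l₁)) := by
      calc (l₁ ++ e :: l₂).Perm ((e :: l₂) ++ l₁) := List.perm_append_comm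
        _ = e :: (l₂ ++ l₁) := by simp
    have := (hperm.map y).sum_eq
    simpa using this

/-- opposite fundamental cycles have opposite fluxes -/
theorem fundcycle_flux_rev {T : Set A} (hT : G.IsSpanningTree T)
    {y : A → Fin d → ℝ} (hy : G.IsOneForm y) {e : A}
    {c₁ c₂ : List A} (h₁ : G.FundCycle T e c₁) (h₂ : G.FundCycle T (G.rev e) c₂) :
    (c₂.map y).sum = - (c₁.map y).sum := by
  obtain ⟨q₁, hq₁T, hq₁w, hq₁s⟩ := fundcycle_decomp h₁
  obtain ⟨q₂, hq₂T, hq₂w, hq₂s⟩ := fundcycle_decomp h₂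
  rw [G.head_rev, tail_rev] at hq₂w
  have hclosed : G.IsWalkFrom (q₁ ++ q₂) (G.tail e) (G.tail e) := walk_append hq₁w hq₂w
  have hzero : ((q₁ ++ q₂).map y).sum = 0 := by
    refine acyclic_flux_zero hT.2.2 hy (q₁ ++ q₂).length _ le_rfl _ ?_ hclosed
    intro f hf
    rcases List.mem_append.1 hf with h | h
    exacts [hq₁T f h, hq₂T f h]
  simp only [List.map_append, List.sum_append] at hzero
  have h2 := eq_neg_of_add_eq_zero_right hzero
  rw [hq₁s y, hq₂s y, hy e, h2]
  abel


theorem sum_map_sub {x m : A → Fin d → ℝ} (l : List A) :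
    (l.map (fun a => x a - m a)).sum = (l.map x).sum - (l.map m).sum := by
  induction l with
  | nil => simp
  | cons e l ih => simp only [List.map_cons, List.sum_cons, ih]; abel

theorem sum_map_add {x m : A → Fin d → ℝ} (l : List A) :
    (l.map (fun a => x a + m a)).sum = (l.map x).sum + (l.map m).sum := by
  induction l with
  | nil => simp
  | cons e l ih => simp only [List.map_cons, List.sum_cons, ih]; abel

theorem orientation_exists [Fintype A] {T : Set A} (hrev : ∀ e ∈ T, G.rev e ∈ T) :
    ∃ S, G.IsOrientation T S := by
  classical
  set ι : A → ℕ := fun e => ((Fintype.equivFin A) e : ℕ) with hι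
  have hιinj : Function.Injective ι := fun a b h =>
    (Fintype.equivFin A).injective (Fin.ext h)
  refine ⟨{e | e ∉ T ∧ ι e < ι (G.rev e)}, fun e he => he.1, ?_⟩
  intro e he
  have hne : ι e ≠ ι (G.rev e) := fun h => G.rev_ne e ((hιinj h).symm)
  constructor
  · rintro ⟨-, hlt⟩ ⟨-, hlt'⟩
    rw [G.rev_rev] at hlt'
    omega
  · intro h
    refine ⟨he, ?_⟩
    rcases lt_or_gt_of_ne hne with h1 | h1
    · exact h1
    · exact absurd ⟨rev_not_mem hrev he, by rw [G.rev_rev]; exact h1⟩ h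

theorem mForm_mem_S {S : Set A} {x : A → Fin d → ℝ} {c : A → List A} {e : A}
    (he : e ∈ S) : G.mForm x S c e = ((c e).map x).sum := if_pos he

theorem mForm_rev_mem_S {S : Set A} {x : A → Fin d → ℝ} {c : A → List A} {e : A}
    (he : e ∉ S) (hre : G.rev e ∈ S) :
    G.mForm x S c e = - (((c (G.rev e)).map x).sum) := by
  rw [mForm, if_neg he, if_pos hre]

theorem mForm_not_mem {S : Set A} {x : A → Fin d → ℝ} {c : A → List A} {e : A}
    (he : e ∉ S) (hre : G.rev e ∉ S) : G.mForm x S c e = 0 := by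
  rw [mForm, if_neg he, if_neg hre]

theorem mForm_isOneForm {T S : Set A} (hS : G.IsOrientation T S)
    {x : A → Fin d → ℝ} {c : A → List A} : G.IsOneForm (G.mForm x S c) := by
  intro e
  by_cases he : e ∈ S
  · have heT : e ∉ T := hS.1 e he
    have hre : G.rev e ∉ S := (hS.2 e heT).1 he
    rw [mForm_mem_S he, mForm_rev_mem_S hre (by rwa [G.rev_rev]), G.rev_rev]
  · by_cases hre : G.rev e ∈ S
    · rw [mForm_rev_mem_S he hre, mForm_mem_S hre, neg_neg]
    · rw [mForm_not_mem he hre, mForm_not_mem hre (by rwa [G.rev_rev]), neg_zero]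

theorem mForm_zero_on_tree {T S : Set A} (hTrev : ∀ e ∈ T, G.rev e ∈ T)
    (hS : G.IsOrientation T S) {x : A → Fin d → ℝ} {c : A → List A} {e : A}
    (he : e ∈ T) : G.mForm x S c e = 0 :=
  mForm_not_mem (fun h => hS.1 e h he) (fun h => hS.1 _ h (hTrev e he))

/-- The key lemma : `mForm x S c` lies in `F(x)`. -/
theorem mForm_inF {T S : Set A} (hT : G.IsSpanningTree T) (hS : G.IsOrientation T S)
    {c : A → List A} (hc : ∀ e, e ∉ T → G.FundCycle T e (c e))
    {x : A → Fin d → ℝ} (hx : G.IsOneForm x) :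
    ∀ (u : V) (l : List A), G.IsWalkFrom l u u →
      (l.map (G.mForm x S c)).sum = (l.map x).sum := by
  intro u l hw
  set m := G.mForm x S c with hm
  set y : A → Fin d → ℝ := fun a => x a - m a with hy
  have hyone : G.IsOneForm y := by
    intro e
    have h := mForm_isOneForm hS (x := x) (c := c) e
    rw [← hm] at h
    simp only [hy, hx e, h]
    abel
  -- potential function from walks in T starting at u
  have hpath : ∀ v : V, ∃ p : List A, (∀ f ∈ p, f ∈ T) ∧ G.IsWalkFrom p u v := hT.2.1 u
  choose p hpT hpw using hpath
  set f : V → Fin d → ℝ := fun v => ((p v).map y).sum with hf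
  -- closed walks in T have zero y-flux
  have hflux0 : ∀ (w : List A) (v : V), (∀ g ∈ w, g ∈ T) → G.IsWalkFrom w v v →
      (w.map y).sum = 0 := fun w v hwT hww =>
    acyclic_flux_zero hT.2.2 hyone w.length w le_rfl v hwT hww
  -- key : y is the gradient of f
  have hkey : ∀ a, a ∈ S ∨ a ∈ T → y a = f (G.tail a) - f (G.head a) := by
    intro a ha
    rcases ha with haS | haT
    · -- a ∈ S : use the fundamental cycle
      have haT : a ∉ T := hS.1 a haS
      obtain ⟨q, hqT, hqw, hqs⟩ := fundcycle_decomp (hc a haT)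
      have hya : y a + (q.map y).sum = 0 := by
        have h1 := hqs y
        have h2 : ((c a).map y).sum = 0 := by
          rw [hy]
          rw [sum_map_sub]
          have h3 := hqs x
          have h4 : ((c a).map m).sum = m a := by
            rw [hqs m]
            have : (q.map m).sum = 0 := by
              apply List.sum_eq_zero
              intro z hz
              obtain ⟨g, hg, rfl⟩ := List.mem_map.1 hz
              exact mForm_zero_on_tree hT.1 hS (hqT g hg)
            rw [this, add_zero]
          rw [h4, hm, mForm_mem_S haS, h3]
          abel
        rw [← h2, h1]
      -- closed walk in T : p (head a) ++ revWalk q ++ revWalk (p (tail a))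
      have hcl : G.IsWalkFrom (p (G.head a) ++ (G.revWalk q ++ G.revWalk (p (G.tail a)))) u u :=
        walk_append (hpw _) (walk_append (walk_rev hqw) (walk_rev (hpw _)))
      have hclT : ∀ g ∈ p (G.head a) ++ (G.revWalk q ++ G.revWalk (p (G.tail a))), g ∈ T := by
        intro g hg
        rcases List.mem_append.1 hg with h | h
        · exact hpT _ g h
        rcases List.mem_append.1 h with h | h
        · rw [mem_revWalk] at h
          have := hT.1 _ (hqT _ h)
          rwa [G.rev_rev] at this
        · rw [mem_revWalk] at h
          have := hT.1 _ (hpT _ _ h)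
          rwa [G.rev_rev] at this
      have h0 := hflux0 _ _ hclT hcl
      simp only [List.map_append, List.sum_append, sum_revWalk hyone] at h0
      rw [hf]
      have : y a = - (q.map y).sum := eq_neg_of_add_eq_zero_left hya
      rw [this]
      rw [show ((p (G.tail a)).map y).sum - ((p (G.head a)).map y).sum
          = - (((p (G.head a)).map y).sum + (- (q.map y).sum + - ((p (G.tail a)).map y).sum))
          + - (q.map y).sum by abel, h0]
      abel
    · -- a ∈ T : closed walk p (head a) ++ a :: revWalk (p (tail a))
      have hcl : G.IsWalkFrom (p (G.head a) ++ (a :: G.revWalk (p (G.tail a)))) u u :=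
        walk_append (hpw _) ⟨rfl, walk_rev (hpw _)⟩
      have hclT : ∀ g ∈ p (G.head a) ++ (a :: G.revWalk (p (G.tail a))), g ∈ T := by
        intro g hg
        rcases List.mem_append.1 hg with h | h
        · exact hpT _ g h
        rcases List.mem_cons.1 h with rfl | h
        · exact haT
        · rw [mem_revWalk] at h
          have := hT.1 _ (hpT _ _ h)
          rwa [G.rev_rev] at this
      have h0 := hflux0 _ _ hclT hcl
      simp only [List.map_append, List.map_cons, List.sum_append, List.sum_cons,
        sum_revWalk hyone] at h0
      rw [hf]
      rw [show ((p (G.tail a)).map y).sum - ((p (G.head a)).map y).sum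
          = - (((p (G.head a)).map y).sum + (y a + - ((p (G.tail a)).map y).sum)) + y a
          by abel, h0]
      abel
  have hkey' : ∀ a, y a = f (G.tail a) - f (G.head a) := by
    intro a
    by_cases haT : a ∈ T
    · exact hkey a (Or.inr haT)
    by_cases haS : a ∈ S
    · exact hkey a (Or.inl haS)
    · have hra : G.rev a ∈ S := by
        by_contra h
        exact haS ((hS.2 a haT).2 h)
      have := hkey (G.rev a) (Or.inl hra)
      rw [hyone a, G.head_rev, tail_rev] at this
      have := congrArg Neg.neg this
      rw [neg_neg] at this
      rw [this]
      abel
  -- telescoping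
  have htel : (l.map y).sum = 0 := by
    have : (l.map y).sum = (l.map (fun a => f (G.tail a) - f (G.head a))).sum := by
      congr 1
      exact List.map_congr_left (fun a _ => hkey' a)
    rw [this, sum_grad f hw, sub_self]
  have := sum_map_sub (x := x) (m := m) l
  rw [hy] at htel
  rw [htel] at this
  have := eq_of_sub_eq_zero this.symm
  exact this.symm


end OGraph

open OGraph

/-- Let `x` be a 1-form on a finite connected graph `G`. Every
minimal form `m̃ ∈ F(x)` (a 1-form in `F(x)` with support of minimal cardinality)
is of the form `m(·,T)` for some `x`-minimal spanning tree `T` of `G`. -/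
theorem minimal_form_eq_mForm {V A : Type} [Fintype V] [Fintype A] {d : ℕ}
    (G : OGraph V A) (hG : G.Connected)
    (x : A → Fin d → ℝ) (hx : G.IsOneForm x)
    (mt : A → Fin d → ℝ) (hmt : G.InF x mt)
    (hmin : ∀ b : A → Fin d → ℝ, G.InF x b → OGraph.suppCard mt ≤ OGraph.suppCard b) :
    ∃ (T S : Set A) (c : A → List A),
      G.IsMinTree x T ∧ G.IsOrientation T S ∧
      (∀ e ∈ S, G.FundCycle T e (c e)) ∧ mt = G.mForm x S c := by
  classical
  -- Step 1 : the zero set of mt spans the graph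
  set Z : Set A := {e | mt e = 0} with hZ
  have hZrev : ∀ e ∈ Z, G.rev e ∈ Z := by
    intro e he
    simp only [hZ, Set.mem_setOf_eq] at he ⊢
    rw [hmt.1 e, he, neg_zero]
  have hZspan : ∀ u v : V, ∃ l, (∀ e ∈ l, e ∈ Z) ∧ G.IsWalkFrom l u v := by
    by_contra hcon
    push_neg at hcon
    obtain ⟨u, v, hv⟩ := hcon
    set P : Set V := {w | ∃ l, (∀ e ∈ l, e ∈ Z) ∧ G.IsWalkFrom l u w} with hPdef
    have huP : u ∈ P := ⟨[], by simp, rfl⟩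
    have hvP : v ∉ P := by
      rintro ⟨l, h1, h2⟩
      exact hv l h1 h2
    have hext : ∀ a : A, G.head a ∈ P → mt a = 0 → G.tail a ∈ P := by
      intro a hha hma
      obtain ⟨l, h1, h2⟩ := hha
      refine ⟨l ++ [a], ?_, walk_append h2 ⟨rfl, rfl⟩⟩
      intro e he
      rcases List.mem_append.1 he with h | h
      · exact h1 e h
      · simp only [List.mem_singleton] at h
        subst h
        simpa [hZ] using hma
    have hcross : ∀ (l : List A) (w : V), w ∈ P → G.IsWalkFrom l w v →
        ∃ e : A, G.head e ∈ P ∧ G.tail e ∉ P := by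
      intro l
      induction l with
      | nil =>
        intro w hw hwalk
        cases hwalk
        exact absurd hw hvP
      | cons e l ih =>
        intro w hw hwalk
        by_cases ht : G.tail e ∈ P
        · exact ih _ ht hwalk.2
        · exact ⟨e, by rw [hwalk.1]; exact hw, ht⟩
    obtain ⟨l0, hw0⟩ := hG u v
    obtain ⟨e₀, he₀P, he₀nP⟩ := hcross l0 u huP hw0
    have hmt0 : mt e₀ ≠ 0 := fun h => he₀nP (hext e₀ he₀P h)
    set f : V → Fin d → ℝ := fun w => if w ∈ P then 0 else - mt e₀ with hfd
    set m' : A → Fin d → ℝ := fun a => mt a + (f (G.tail a) - f (G.head a)) with hm'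
    have hm'F : G.InF x m' := by
      constructor
      · intro e
        simp only [hm', hmt.1 e, G.head_rev, tail_rev]
        abel
      · intro w l hl
        have h1 : (l.map m').sum = (l.map mt).sum +
            (l.map (fun a => f (G.tail a) - f (G.head a))).sum := sum_map_add l
        rw [h1, sum_grad f hl, sub_self, add_zero, hmt.2 w l hl]
    have hsub : Finset.univ.filter (fun a => m' a ≠ 0) ⊆
        (Finset.univ.filter (fun a => mt a ≠ 0)).erase e₀ := by
      intro a ha
      simp only [Finset.mem_filter, Finset.mem_univ, true_and] at ha
      rw [Finset.mem_erase, Finset.mem_filter]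
      have hane : a ≠ e₀ := by
        rintro rfl
        apply ha
        simp only [hm', hfd]
        rw [if_neg he₀nP, if_pos he₀P]
        abel
      refine ⟨hane, Finset.mem_univ a, ?_⟩
      intro hmta
      apply ha
      have hPiff : G.head a ∈ P ↔ G.tail a ∈ P := by
        constructor
        · intro h
          exact hext a h hmta
        · intro h
          have := hext (G.rev a) (by rwa [G.head_rev]) (by rw [hmt.1 a, hmta, neg_zero])
          rwa [tail_rev] at this
      have : f (G.tail a) = f (G.head a) := by
        simp only [hfd]
        by_cases hh : G.head a ∈ P
        · rw [if_pos (hPiff.1 hh), if_pos hh]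
        · rw [if_neg (fun h => hh (hPiff.2 h)), if_neg hh]
      simp only [hm', this, hmta]
      abel
    have hlt : OGraph.suppCard m' < OGraph.suppCard mt := by
      have he₀mem : e₀ ∈ Finset.univ.filter (fun a => mt a ≠ 0) := by
        simp [hmt0]
      calc OGraph.suppCard m' ≤ ((Finset.univ.filter (fun a => mt a ≠ 0)).erase e₀).card :=
            Finset.card_le_card hsub
        _ < (Finset.univ.filter (fun a => mt a ≠ 0)).card := Finset.card_erase_lt_of_mem he₀mem
        _ = OGraph.suppCard mt := rfl
    exact absurd (hmin m' hm'F) (by omega)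
  -- Step 2 : a spanning tree inside Z
  obtain ⟨T, hTZ, hT⟩ := spanning_tree_exists hZrev hZspan
  have hmtT : ∀ e ∈ T, mt e = 0 := fun e he => hTZ he
  -- Step 3 : trail paths in T and fundamental cycles
  have hpath : ∀ a b : V, ∃ l, (∀ e ∈ l, e ∈ T) ∧ G.IsWalkFrom l a b ∧
      l.Pairwise (fun e f => e ≠ f ∧ e ≠ G.rev f) := by
    intro a b
    obtain ⟨l, h1, h2⟩ := hT.2.1 a b
    exact exists_trail l.length l le_rfl h1 h2
  choose p hp1 hp2 hp3 using hpath
  set c : A → List A := fun e => if e ∈ T then [] else e :: p (G.tail e) (G.head e) with hc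
  have hcdef : ∀ e, e ∉ T → c e = e :: p (G.tail e) (G.head e) := by
    intro e he
    simp only [hc, if_neg he]
  have hfc : ∀ e, e ∉ T → G.FundCycle T e (c e) := by
    intro e he
    have hreT : G.rev e ∉ T := rev_not_mem hT.1 he
    rw [hcdef e he]
    refine ⟨⟨G.head e, ⟨rfl, hp2 _ _⟩, by simp, ?_⟩, by simp, ?_⟩
    · rw [List.pairwise_cons]
      refine ⟨?_, hp3 _ _⟩
      intro f hf
      have hfT := hp1 _ _ f hf
      refine ⟨fun h => he (h ▸ hfT), fun h => hreT ?_⟩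
      rw [h, G.rev_rev]
      exact hfT
    · intro f hf hne
      rcases List.mem_cons.1 hf with rfl | hf
      · exact absurd rfl hne
      · exact hp1 _ _ f hf
  have hkey : ∀ e, e ∉ T → ((c e).map x).sum = mt e := by
    intro e he
    have hwalk : G.IsWalkFrom (c e) (G.head e) (G.head e) := by
      rw [hcdef e he]
      exact ⟨rfl, hp2 _ _⟩
    have h1 := hmt.2 (G.head e) (c e) hwalk
    rw [← h1, hcdef e he]
    simp only [List.map_cons, List.sum_cons]
    have h2 : ((p (G.tail e) (G.head e)).map mt).sum = 0 := by
      apply List.sum_eq_zero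
      intro z hz
      obtain ⟨g, hg, rfl⟩ := List.mem_map.1 hz
      exact hTZ (hp1 _ _ g hg)
    rw [h2, add_zero]
  -- Step 4 : orientation
  obtain ⟨S, hor⟩ := orientation_exists (G := G) hT.1
  -- Step 5 : mt = mForm x S c
  have hmteq : mt = G.mForm x S c := by
    funext e
    by_cases heS : e ∈ S
    · rw [mForm_mem_S heS, hkey e (hor.1 e heS)]
    · by_cases hreS : G.rev e ∈ S
      · rw [mForm_rev_mem_S heS hreS, hkey _ (hor.1 _ hreS), hmt.1 e, neg_neg]
      · have heT : e ∈ T := by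
          by_contra heT
          exact heS ((hor.2 e heT).2 hreS)
        rw [mForm_not_mem heS hreS, hmtT e heT]
  -- Step 6 : badCount for T equals suppCard mt
  have hbad : OGraph.badCount x T c = OGraph.suppCard mt := by
    unfold OGraph.badCount OGraph.suppCard
    congr 1
    apply Finset.filter_congr
    intro a _
    constructor
    · rintro ⟨haT, hΦ⟩
      rwa [hkey a haT] at hΦ
    · intro hmta
      have haT : a ∉ T := fun h => hmta (hmtT a h)
      rw [hkey a haT]
      exact ⟨haT, hmta⟩
  -- Step 7 : minimality among spanning trees
  refine ⟨T, S, c, ⟨hT, c, hfc, ?_⟩, hor, fun e he => hfc e (hor.1 e he), hmteq⟩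
  intro T' c' hT' hc'
  obtain ⟨S', hor'⟩ := orientation_exists (G := G) hT'.1
  set m'' := G.mForm x S' c' with hm''
  have hm''F : G.InF x m'' := ⟨mForm_isOneForm hor', mForm_inF hT' hor' hc' hx⟩
  have hsub : Finset.univ.filter (fun a => m'' a ≠ 0) ⊆
      Finset.univ.filter (fun a => a ∉ T' ∧ ((c' a).map x).sum ≠ 0) := by
    intro a ha
    simp only [Finset.mem_filter, Finset.mem_univ, true_and] at ha ⊢
    by_cases haS : a ∈ S'
    · have haT : a ∉ T' := hor'.1 a haS
      rw [hm'', mForm_mem_S haS] at ha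
      exact ⟨haT, ha⟩
    · by_cases hraS : G.rev a ∈ S'
      · have hraT : G.rev a ∉ T' := hor'.1 _ hraS
        have haT : a ∉ T' := fun h => hraT (hT'.1 a h)
        rw [hm'', mForm_rev_mem_S haS hraS] at ha
        refine ⟨haT, ?_⟩
        have := fundcycle_flux_rev hT' hx (hc' a haT) (hc' (G.rev a) hraT)
        intro h0
        rw [h0, neg_zero] at this
        rw [this, neg_zero] at ha
        exact ha rfl
      · rw [hm'', mForm_not_mem haS hraS] at ha
        exact absurd rfl ha
  calc OGraph.badCount x T c = OGraph.suppCard mt := hbad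
    _ ≤ OGraph.suppCard m'' := hmin m'' hm''F
    _ ≤ OGraph.badCount x T' c' := Finset.card_le_card hsub
end

section
/- The invariant I = (1/2)·#supp m of a connected Γ-periodic graph (m a minimal form in F(κ)) satisfies d ≤ I ≤ β, where d is the rank of Γ and β is the Betti number of the fundamental graph G*. -/
open Classical Finset

section Aux

open OGraph

variable {V A : Type}

lemma OGraph.tail_rev_s11 (G : OGraph V A) (e : A) : G.tail (G.rev e) = G.head e := by
  conv_rhs => rw [← G.rev_rev e]
  rw [G.head_rev]

lemma aux_walk_sum {d : ℕ} (G : OGraph V A) (κ : A → Fin d → ℝ) (f : V → Fin d → ℝ) :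
    ∀ (l : List A) (u v : V), G.IsWalkFrom l u v →
      (l.map (fun e => κ e + f (G.head e) - f (G.tail e))).sum
        = (l.map κ).sum + f u - f v := by
  intro l
  induction l with
  | nil =>
    intro u v h
    have huv : u = v := h
    subst huv; simp
  | cons e l ih =>
    intro u v h
    obtain ⟨h1, h2⟩ := h
    rw [List.map_cons, List.sum_cons, List.map_cons, List.sum_cons, ih _ _ h2, h1]
    abel

lemma aux_crossing (G : OGraph V A) :
    ∀ (l : List A) (u v : V) (s : Finset V), G.IsWalkFrom l u v → u ∈ s → v ∉ s →
      ∃ e, G.head e ∈ s ∧ G.tail e ∉ s := by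
  intro l
  induction l with
  | nil =>
    intro u v s h hu hv
    have huv : u = v := h
    exact absurd (huv ▸ hu) hv
  | cons e l ih =>
    intro u v s h hu hv
    obtain ⟨h1, h2⟩ := h
    by_cases ht : G.tail e ∈ s
    · exact ih _ _ s h2 ht hv
    · exact ⟨e, by rw [h1]; exact hu, ht⟩

noncomputable def goodSet [Fintype A] {d : ℕ} (G : OGraph V A) (κ : A → Fin d → ℝ)
    (f : V → Fin d → ℝ) (s : Finset V) : Finset A :=
  Finset.univ.filter
    (fun e => G.head e ∈ s ∧ G.tail e ∈ s ∧ f (G.tail e) = f (G.head e) + κ e)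

lemma aux_grow [Fintype V] [Fintype A] {d : ℕ} (G : OGraph V A) (hconn : G.Connected)
    (κ : A → Fin d → ℝ) (hκ : G.IsOneForm κ) :
    ∀ (n : ℕ) (s : Finset V) (f : V → Fin d → ℝ),
      s.card + n = Fintype.card V → s.Nonempty →
      2 * s.card ≤ (goodSet G κ f s).card + 2 →
      ∃ f' : V → Fin d → ℝ,
        2 * Fintype.card V ≤ (goodSet G κ f' Finset.univ).card + 2 := by
  classical
  intro n
  induction n with
  | zero =>
    intro s f hcard hne hinv
    have hs : s = Finset.univ := Finset.eq_univ_of_card s (by omega)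
    refine ⟨f, ?_⟩
    rw [hs] at hinv
    rw [← Finset.card_univ]
    omega
  | succ n ih =>
    intro s f hcard hne hinv
    have hex : ∃ v, v ∉ s := by
      by_contra h
      push_neg at h
      have hs : s = Finset.univ := Finset.eq_univ_iff_forall.2 h
      rw [hs, Finset.card_univ] at hcard
      omega
    obtain ⟨v, hv⟩ := hex
    obtain ⟨u, hu⟩ := hne
    obtain ⟨l, hl⟩ := hconn u v
    obtain ⟨e, he1, he2⟩ := aux_crossing G l u v s hl hu hv
    set w := G.tail e with hw
    set f' : V → Fin d → ℝ := Function.update f w (f (G.head e) + κ e) with hf'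
    have hfs : ∀ x ∈ s, f' x = f x := by
      intro x hx
      apply Function.update_of_ne
      rintro rfl
      exact he2 hx
    have hfw : f' w = f (G.head e) + κ e := Function.update_self _ _ _
    have hgsub : goodSet G κ f s ⊆ goodSet G κ f' (insert w s) := by
      intro x hx
      simp only [goodSet, Finset.mem_filter, Finset.mem_univ, true_and] at hx ⊢
      obtain ⟨hx1, hx2, hx3⟩ := hx
      exact ⟨Finset.mem_insert_of_mem hx1, Finset.mem_insert_of_mem hx2,
        by rw [hfs _ hx2, hfs _ hx1]; exact hx3⟩
    have heg : e ∈ goodSet G κ f' (insert w s) := by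
      simp only [goodSet, Finset.mem_filter, Finset.mem_univ, true_and]
      refine ⟨Finset.mem_insert_of_mem he1, ?_, ?_⟩
      · exact Finset.mem_insert_self _ _
      · rw [show G.tail e = w from rfl, hfw, hfs _ he1]
    have hrg : G.rev e ∈ goodSet G κ f' (insert w s) := by
      simp only [goodSet, Finset.mem_filter, Finset.mem_univ, true_and]
      rw [G.head_rev, G.tail_rev_s11, hκ]
      refine ⟨Finset.mem_insert_self _ _, Finset.mem_insert_of_mem he1, ?_⟩
      rw [hfs _ he1, hfw]
      abel
    have hene : e ∉ goodSet G κ f s := by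
      simp only [goodSet, Finset.mem_filter, Finset.mem_univ, true_and]
      rintro ⟨-, h2, -⟩
      exact he2 h2
    have hrne : G.rev e ∉ goodSet G κ f s := by
      simp only [goodSet, Finset.mem_filter, Finset.mem_univ, true_and, G.head_rev]
      rintro ⟨h2, -, -⟩
      exact he2 h2
    have hne' : e ≠ G.rev e := (G.rev_ne e).symm
    have hcard2 : (goodSet G κ f s).card + 2 ≤ (goodSet G κ f' (insert w s)).card := by
      have hsub : insert e (insert (G.rev e) (goodSet G κ f s))
          ⊆ goodSet G κ f' (insert w s) := by
        intro x hx
        rcases Finset.mem_insert.1 hx with rfl | hx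
        · exact heg
        rcases Finset.mem_insert.1 hx with rfl | hx
        · exact hrg
        · exact hgsub hx
      have h1 : (insert e (insert (G.rev e) (goodSet G κ f s))).card
          = (goodSet G κ f s).card + 2 := by
        rw [Finset.card_insert_of_notMem, Finset.card_insert_of_notMem hrne]
        simp only [Finset.mem_insert, not_or]
        exact ⟨hne', hene⟩
      have h2 := Finset.card_le_card hsub
      omega
    have hwins : w ∉ s := he2
    refine ih (insert w s) f' ?_ ⟨u, Finset.mem_insert_of_mem hu⟩ ?_
    · rw [Finset.card_insert_of_notMem hwins]; omega
    · rw [Finset.card_insert_of_notMem hwins]; omega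

end Aux

/-- The invariant `I = (1/2)·#supp m` of a connected
`Γ`-periodic graph (`m` a minimal form in `F(κ)` on the fundamental graph, which
is a finite connected graph whose closed-walk `κ`-fluxes form exactly `ℤ^d`)
satisfies `d ≤ I ≤ β`, where `β = #E − #V + 1` is the Betti number of the
fundamental graph. Without division and natural subtraction (`#E = #A/2`):
`2d ≤ #supp m` and `#supp m + 2·#V ≤ #A + 2`. -/
theorem invariant_between_rank_and_betti {V A : Type} [Fintype V] [Fintype A] {d : ℕ}
    (G : OGraph V A) (hconn : G.Connected)
    (κ : A → Fin d → ℝ) (hκ : G.IsOneForm κ)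
    (hflux : {s : Fin d → ℝ | ∃ (u : V) (l : List A),
        G.IsWalkFrom l u u ∧ s = (l.map κ).sum}
      = Set.range (fun a : Fin d → ℤ => fun i => (a i : ℝ)))
    (m : A → Fin d → ℝ) (hm : G.InF κ m)
    (hmin : ∀ b : A → Fin d → ℝ, G.InF κ b → OGraph.suppCard m ≤ OGraph.suppCard b) :
    2 * d ≤ OGraph.suppCard m ∧
    OGraph.suppCard m + 2 * Fintype.card V ≤ Fintype.card A + 2 := by
  classical
  obtain ⟨hm1, hm2⟩ := hm
  have h00 : (fun i => ((0 : Fin d → ℤ) i : ℝ)) ∈ {s : Fin d → ℝ | ∃ (u : V) (l : List A),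
      G.IsWalkFrom l u u ∧ s = (l.map κ).sum} := by
    rw [hflux]; exact ⟨0, rfl⟩
  obtain ⟨u0, -, -⟩ := h00
  constructor
  · -- part 1 : 2 * d ≤ suppCard m
    set ι := Fintype.equivFin A with hι
    set supp := Finset.univ.filter (fun e => m e ≠ 0) with hsupp
    set S := supp.filter (fun e => ι e < ι (G.rev e)) with hS
    have hscm : OGraph.suppCard m = supp.card := rfl
    have hrevinj : Function.Injective G.rev := Function.Involutive.injective G.rev_rev
    have hiotane : ∀ e : A, ι e ≠ ι (G.rev e) := by
      intro e h
      exact G.rev_ne e (ι.injective h).symm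
    have hmrev : ∀ e : A, m e ≠ 0 → m (G.rev e) ≠ 0 := by
      intro e h
      rw [hm1 e]
      exact neg_ne_zero.2 h
    have hcard : supp.card = 2 * S.card := by
      have h1 := Finset.card_filter_add_card_filter_not
        (s := supp) (p := fun e => ι e < ι (G.rev e))
      have himg : supp.filter (fun e => ¬ ι e < ι (G.rev e)) = S.image G.rev := by
        ext e
        simp only [Finset.mem_image, Finset.mem_filter, hsupp, hS,
          Finset.mem_univ, true_and]
        constructor
        · rintro ⟨hm0, hlt⟩
          refine ⟨G.rev e, ⟨⟨hmrev e hm0, ?_⟩, G.rev_rev e⟩⟩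
          rw [G.rev_rev]
          exact lt_of_le_of_ne (not_lt.1 hlt) (Ne.symm (hiotane e))
        · rintro ⟨x, ⟨⟨hx0, hxlt⟩, rfl⟩⟩
          rw [G.rev_rev]
          exact ⟨hmrev x hx0, not_lt.2 (le_of_lt hxlt)⟩
      rw [himg, Finset.card_image_of_injective _ hrevinj, ← hS] at h1
      omega
    have hmem : ∀ e, m e ∈ Submodule.span ℝ
        ((S.image m : Finset (Fin d → ℝ)) : Set (Fin d → ℝ)) := by
      intro e
      by_cases h0 : m e = 0
      · rw [h0]; exact Submodule.zero_mem _
      by_cases hlt : ι e < ι (G.rev e)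
      · have heS : e ∈ S := Finset.mem_filter.2
          ⟨Finset.mem_filter.2 ⟨Finset.mem_univ e, h0⟩, hlt⟩
        exact Submodule.subset_span (Finset.mem_coe.2 (Finset.mem_image_of_mem m heS))
      · have heS : G.rev e ∈ S := by
          refine Finset.mem_filter.2 ⟨Finset.mem_filter.2 ⟨Finset.mem_univ _, hmrev e h0⟩, ?_⟩
          rw [G.rev_rev]
          exact lt_of_le_of_ne (not_lt.1 hlt) (Ne.symm (hiotane e))
        have hme : m e = - m (G.rev e) := by rw [hm1 e, neg_neg]
        rw [hme]
        exact Submodule.neg_mem _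
          (Submodule.subset_span (Finset.mem_coe.2 (Finset.mem_image_of_mem m heS)))
    have hlsum : ∀ l : List A, (l.map m).sum ∈ Submodule.span ℝ
        ((S.image m : Finset (Fin d → ℝ)) : Set (Fin d → ℝ)) := by
      intro l
      induction l with
      | nil => simp
      | cons e l ih =>
        rw [List.map_cons, List.sum_cons]
        exact Submodule.add_mem _ (hmem e) ih
    have hbasis : ∀ i : Fin d, (fun j => if i = j then (1:ℝ) else 0) ∈ Submodule.span ℝ
        ((S.image m : Finset (Fin d → ℝ)) : Set (Fin d → ℝ)) := by
      intro i
      have hi : (fun j => ((Pi.single i 1 : Fin d → ℤ) j : ℝ)) ∈ {s : Fin d → ℝ |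
          ∃ (u : V) (l : List A), G.IsWalkFrom l u u ∧ s = (l.map κ).sum} := by
        rw [hflux]; exact ⟨Pi.single i 1, rfl⟩
      obtain ⟨u, l, hw, hsum⟩ := hi
      have hms : (l.map m).sum = fun j => if i = j then (1:ℝ) else 0 := by
        rw [hm2 u l hw, ← hsum]
        funext j
        by_cases h : i = j
        · subst h; simp
        · simp [Pi.single_apply, Ne.symm h, h]
      rw [← hms]
      exact hlsum l
    have htop : ∀ x : Fin d → ℝ, x ∈ Submodule.span ℝ
        ((S.image m : Finset (Fin d → ℝ)) : Set (Fin d → ℝ)) := by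
      intro x
      have hx := pi_eq_sum_univ x
      rw [hx]
      exact Submodule.sum_mem _ (fun i _ => Submodule.smul_mem _ _ (hbasis i))
    have hrank : d ≤ S.card := by
      have h1 : Submodule.span ℝ ((S.image m : Finset (Fin d → ℝ)) : Set (Fin d → ℝ)) = ⊤ :=
        Submodule.eq_top_iff'.2 htop
      have h2 := finrank_span_finset_le_card (R := ℝ) (S.image m)
      unfold Set.finrank at h2
      rw [h1, finrank_top, Module.finrank_fin_fun] at h2
      exact le_trans h2 (le_trans (Finset.card_image_le) (le_refl _))
    rw [hscm, hcard]
    omega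
  · -- part 2
    have hVpos : 0 < Fintype.card V := Fintype.card_pos_iff.2 ⟨u0⟩
    obtain ⟨f, hf⟩ := aux_grow G hconn κ hκ (Fintype.card V - 1) {u0} 0
      (by rw [Finset.card_singleton]; omega) ⟨u0, Finset.mem_singleton_self u0⟩
      (by rw [Finset.card_singleton]; omega)
    set b : A → Fin d → ℝ := fun e => κ e + f (G.head e) - f (G.tail e) with hb
    have hbform : G.IsOneForm b := by
      intro e
      simp only [hb]
      rw [G.head_rev, G.tail_rev_s11, hκ]
      abel
    have hbF : G.InF κ b := by
      refine ⟨hbform, fun u l hw => ?_⟩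
      rw [aux_walk_sum G κ f l u u hw]
      abel
    have h1 := hmin b hbF
    have hsub : Finset.univ.filter (fun e => b e ≠ 0)
        ⊆ Finset.univ \ goodSet G κ f Finset.univ := by
      intro e he
      rw [Finset.mem_filter] at he
      rw [Finset.mem_sdiff]
      refine ⟨Finset.mem_univ e, ?_⟩
      intro hg
      have hgood := (Finset.mem_filter.1 hg).2.2.2
      apply he.2
      simp only [hb]
      rw [hgood]
      abel
    have h2 : OGraph.suppCard b ≤ Fintype.card A - (goodSet G κ f Finset.univ).card := by
      have := Finset.card_le_card hsub
      rw [Finset.card_sdiff_of_subset (Finset.subset_univ _), Finset.card_univ] at this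
      exact this
    have h3 : (goodSet G κ f Finset.univ).card ≤ Fintype.card A := by
      rw [← Finset.card_univ]
      exact Finset.card_le_card (Finset.subset_univ _)
    omega
end

section
/- For every nonnegative integer n there exists a connected periodic graph whose Betti number β and invariant I satisfy β − I = n. -/
open Classical Finset

namespace Stmt12

/-- reversal map: add `n+1` modulo `2n+2`. -/
def rv (n : ℕ) (e : Fin (2*n+2)) : Fin (2*n+2) :=
  ⟨(e.val + (n+1)) % (2*n+2), Nat.mod_lt _ (by omega)⟩

/-- the graph: one vertex, `n+1` loops. -/
def G (n : ℕ) : OGraph (Fin 1) (Fin (2*n+2)) where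
  head _ := 0
  tail _ := 0
  rev := rv n
  rev_rev e := by
    apply Fin.ext
    show ((e.val + (n+1)) % (2*n+2) + (n+1)) % (2*n+2) = e.val
    rw [Nat.mod_add_mod]
    have h : e.val + (n+1) + (n+1) = e.val + (2*n+2) := by ring
    rw [h, Nat.add_mod_right, Nat.mod_eq_of_lt e.isLt]
  rev_ne e := by
    intro h
    have h' : (e.val + (n+1)) % (2*n+2) = e.val := congrArg Fin.val h
    rcases Nat.lt_or_ge (e.val + (n+1)) (2*n+2) with hc | hc
    · rw [Nat.mod_eq_of_lt hc] at h'; omega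
    · rw [Nat.mod_eq_sub_mod hc, Nat.mod_eq_of_lt (by omega : e.val + (n+1) - (2*n+2) < 2*n+2)] at h'
      have := e.isLt; omega
  head_rev _ := rfl

/-- the 1-form: `±1` on the first loop, `0` elsewhere. -/
noncomputable def κ (n : ℕ) (e : Fin (2*n+2)) : Fin 1 → ℝ :=
  if e = ⟨0, by omega⟩ then 1 else if e = ⟨n+1, by omega⟩ then -1 else 0

lemma rv0 (n : ℕ) : rv n ⟨0, by omega⟩ = ⟨n+1, by omega⟩ := by
  apply Fin.ext
  show (0 + (n+1)) % (2*n+2) = n+1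
  rw [Nat.zero_add, Nat.mod_eq_of_lt (by omega)]

lemma rv1 (n : ℕ) : rv n ⟨n+1, by omega⟩ = ⟨0, by omega⟩ := by
  apply Fin.ext
  show ((n+1) + (n+1)) % (2*n+2) = 0
  have h : (n+1) + (n+1) = 2*n+2 := by ring
  rw [h, Nat.mod_self]

lemma allWalk (n : ℕ) : ∀ (l : List (Fin (2*n+2))) (u v : Fin 1),
    (G n).IsWalkFrom l u v := by
  intro l
  induction l with
  | nil => intro u v; exact Subsingleton.elim u v
  | cons e l ih => intro u v; exact ⟨Subsingleton.elim _ _, ih _ _⟩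

lemma oneForm (n : ℕ) : (G n).IsOneForm (κ n) := by
  intro e
  by_cases h0 : e = ⟨0, by omega⟩
  · subst h0
    show κ n (rv n _) = _
    rw [rv0]
    unfold κ
    rw [if_neg (by intro h; have := congrArg Fin.val h; simp at this),
      if_pos rfl, if_pos rfl]
  · by_cases h1 : e = ⟨n+1, by omega⟩
    · subst h1
      show κ n (rv n _) = _
      rw [rv1]
      unfold κ
      rw [if_pos rfl, if_neg (by intro h; have := congrArg Fin.val h; simp at this),
        if_pos rfl]
      norm_num
    · have hrr : rv n (rv n e) = e := (G n).rev_rev e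
      have hr0 : rv n e ≠ ⟨0, by omega⟩ := by
        intro h
        apply h1
        rw [← hrr, h, rv0]
      have hr1 : rv n e ≠ ⟨n+1, by omega⟩ := by
        intro h
        apply h0
        rw [← hrr, h, rv1]
      show κ n (rv n e) = - κ n e
      unfold κ
      rw [if_neg hr0, if_neg hr1, if_neg h0, if_neg h1]
      norm_num

lemma kappa_int (n : ℕ) (e : Fin (2*n+2)) : ∃ c : ℤ, κ n e = fun _ => (c : ℝ) := by
  unfold κ
  split_ifs
  · exact ⟨1, by funext i; norm_num⟩
  · exact ⟨-1, by funext i; norm_num⟩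
  · exact ⟨0, by funext i; norm_num⟩

lemma sum_int (n : ℕ) (l : List (Fin (2*n+2))) :
    ∃ c : ℤ, (l.map (κ n)).sum = fun _ => (c : ℝ) := by
  induction l with
  | nil => exact ⟨0, by funext i; simp⟩
  | cons e l ih =>
    obtain ⟨c, hc⟩ := ih
    obtain ⟨c', hc'⟩ := kappa_int n e
    refine ⟨c' + c, ?_⟩
    simp only [List.map_cons, List.sum_cons, hc, hc']
    funext i
    push_cast
    simp

lemma e0_ne_e1 (n : ℕ) : (⟨0, by omega⟩ : Fin (2*n+2)) ≠ ⟨n+1, by omega⟩ := by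
  intro h
  have := congrArg Fin.val h
  simp at this

lemma kappa0 (n : ℕ) : κ n ⟨0, by omega⟩ = 1 := by
  unfold κ; rw [if_pos rfl]

lemma kappa1 (n : ℕ) : κ n ⟨n+1, by omega⟩ = -1 := by
  unfold κ; rw [if_neg (Ne.symm (e0_ne_e1 n)), if_pos rfl]

lemma supp_m (n : ℕ) : OGraph.suppCard (κ n) = 2 := by
  have h : (Finset.univ.filter (fun e => κ n e ≠ 0))
      = ({⟨0, by omega⟩, ⟨n+1, by omega⟩} : Finset (Fin (2*n+2))) := by
    ext e
    simp only [Finset.mem_filter, Finset.mem_univ, true_and, Finset.mem_insert,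
      Finset.mem_singleton]
    constructor
    · intro he
      by_contra hcon
      push_neg at hcon
      apply he
      unfold κ
      rw [if_neg hcon.1, if_neg hcon.2]
    · rintro (rfl | rfl)
      · rw [kappa0]
        intro h
        have := congrFun h 0
        norm_num at this
      · rw [kappa1]
        intro h
        have := congrFun h 0
        have : (-1 : Fin 1 → ℝ) 0 = (0 : Fin 1 → ℝ) 0 := by rw [this]
        norm_num at this
  unfold OGraph.suppCard
  rw [h, Finset.card_insert_of_notMem (by simpa using e0_ne_e1 n),
    Finset.card_singleton]

end Stmt12

/-- For every nonnegative integer `n` there exists a connected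
periodic graph whose Betti number `β` and invariant `I` satisfy `β − I = n`.
A periodic graph is given through its fundamental graph: a finite connected
graph together with a 1-form `κ` whose closed-walk fluxes form exactly the
lattice `ℤ^d` (`d ≥ 1`), and `I = (1/2)·#supp m` for a minimal form `m ∈ F(κ)`.
The identity `β − I = n` with `β = #E − #V + 1` and `#E = #A/2` reads
`#A + 2 = 2·#V + #supp m + 2n`. -/
theorem exists_periodic_graph_betti_sub_invariant_eq (n : ℕ) :
    ∃ (d p q : ℕ) (G : OGraph (Fin p) (Fin q))
      (κ m : Fin q → Fin d → ℝ),
      1 ≤ d ∧ G.Connected ∧ G.IsOneForm κ ∧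
      ({s : Fin d → ℝ | ∃ (u : Fin p) (l : List (Fin q)),
          G.IsWalkFrom l u u ∧ s = (l.map κ).sum}
        = Set.range (fun a : Fin d → ℤ => fun i => (a i : ℝ))) ∧
      G.InF κ m ∧
      (∀ b : Fin q → Fin d → ℝ, G.InF κ b →
        OGraph.suppCard m ≤ OGraph.suppCard b) ∧
      q + 2 = 2 * p + OGraph.suppCard m + 2 * n := by
  refine ⟨1, 1, 2*n+2, Stmt12.G n, Stmt12.κ n, Stmt12.κ n,
    le_refl 1, fun u v => ⟨[], Subsingleton.elim u v⟩, Stmt12.oneForm n, ?_, ?_, ?_, ?_⟩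
  · -- flux set equals ℤ
    ext s
    constructor
    · rintro ⟨u, l, -, rfl⟩
      obtain ⟨c, hc⟩ := Stmt12.sum_int n l
      exact ⟨fun _ => c, by rw [hc]⟩
    · rintro ⟨a, rfl⟩
      refine ⟨0, ?_⟩
      rcases le_or_gt 0 (a 0) with hk | hk
      · refine ⟨List.replicate (a 0).toNat ⟨0, by omega⟩, Stmt12.allWalk n _ 0 0, ?_⟩
        rw [List.map_replicate, List.sum_replicate, Stmt12.kappa0]
        funext i
        have hi : i = 0 := Subsingleton.elim i 0
        subst hi
        show ((a 0 : ℝ)) = (a 0).toNat • (1 : Fin 1 → ℝ) 0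
        simp only [Pi.one_apply, nsmul_eq_mul, mul_one]
        exact_mod_cast (Int.toNat_of_nonneg hk).symm
      · refine ⟨List.replicate (-(a 0)).toNat ⟨n+1, by omega⟩, Stmt12.allWalk n _ 0 0, ?_⟩
        rw [List.map_replicate, List.sum_replicate, Stmt12.kappa1]
        funext i
        have hi : i = 0 := Subsingleton.elim i 0
        subst hi
        have h2 : ((-(a 0)).toNat : ℤ) = -(a 0) := Int.toNat_of_nonneg (by omega)
        have h1 : ((-(a 0)).toNat : ℝ) = -(a 0 : ℝ) := by exact_mod_cast h2
        show ((a 0 : ℝ)) = (-(a 0)).toNat • (-1 : Fin 1 → ℝ) 0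
        simp only [Pi.neg_apply, Pi.one_apply, nsmul_eq_mul]
        rw [h1]
        ring
  · exact ⟨Stmt12.oneForm n, fun u l _ => rfl⟩
  · intro b hb
    have hw : (Stmt12.G n).IsWalkFrom [⟨0, by omega⟩] 0 0 :=
      Stmt12.allWalk n _ 0 0
    have hsum := hb.2 0 [⟨0, by omega⟩] hw
    simp only [List.map_cons, List.map_nil, List.sum_cons, List.sum_nil, add_zero] at hsum
    have hb0 : b ⟨0, by omega⟩ ≠ 0 := by
      rw [hsum, Stmt12.kappa0]
      intro h
      have := congrFun h 0
      norm_num at this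
    have hbr : b ((Stmt12.G n).rev ⟨0, by omega⟩) ≠ 0 := by
      rw [hb.1]
      exact neg_ne_zero.mpr hb0
    rw [Stmt12.supp_m]
    have hsub : ({⟨0, by omega⟩, (Stmt12.G n).rev ⟨0, by omega⟩} : Finset (Fin (2*n+2)))
        ⊆ Finset.univ.filter (fun e => b e ≠ 0) := by
      intro e he
      simp only [Finset.mem_insert, Finset.mem_singleton] at he
      rcases he with rfl | rfl
      · simpa using hb0
      · simpa using hbr
    calc 2 = ({⟨0, by omega⟩, (Stmt12.G n).rev ⟨0, by omega⟩} :
          Finset (Fin (2*n+2))).card := by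
          rw [Finset.card_insert_of_notMem
            (by simpa using ((Stmt12.G n).rev_ne ⟨0, by omega⟩).symm),
            Finset.card_singleton]
      _ ≤ _ := Finset.card_le_card hsub
  · rw [Stmt12.supp_m]
    omega
end
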